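/- arXiv:1509.08564 — 3 statements merged into one kernel-verified Lean document; each statement's English description precedes it below -/
import Mathlib

section
/- If a relation B on a countable set X is transitive (and reflexive), then its lifting to probability distributions over X is transitive: if π₁ B̂ π₂ and π₂ B̂ π₃ then π₁ B̂ π₃, with the composite weight function w(t,t'') = Σ_{t' with π₂(t')>0} w₁(t,t')·w₂(t',t'')/π₂(t'). -/
/-!
Transitivity of the lifting is the composition of couplings: the composite weight routes the mass
`w₁ t t'` arriving at `t'` onwards in the proportions `w₂ t' t'' / π₂ t'` of the second coupling.
Its marginals are those of `w₁` on the left and of `w₂` on the right, and it only charges pairs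
joined by a path `t B t' B t''`.
-/

/-- `w` is a weight function witnessing that the lifting of `B` relates `π` to `π`. -/
def IsWeight {X : Type*} (B : X → X → Prop) (π π' : X → ENNReal)
    (w : X → X → ENNReal) : Prop :=
  (∀ t t', w t t' ≤ 1) ∧
  (∀ t, ∑' t', w t t' = π t) ∧
  (∀ t', ∑' t, w t t' = π' t') ∧
  (∀ t t', 0 < w t t' → B t t')

/-- The lifting of a relation `B` on `X` to probability distributions over `X`. -/
def Lift {X : Type*} (B : X → X → Prop) (π π' : X → ENNReal) : Prop :=
  ∃ w, IsWeight B π π' w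

section

variable {X : Type*}

lemma tsum_pos_subtype_eq {M : Type*} [AddCommMonoid M] [TopologicalSpace M]
    {π : X → ENNReal} {f : X → M} (hf : ∀ t, π t = 0 → f t = 0) :
    ∑' t : {t : X // 0 < π t}, f t = ∑' t, f t :=
  tsum_subtype_eq_of_support_subset (s := {t | 0 < π t}) fun t hft =>
    pos_iff_ne_zero.mpr fun hπ => hft (hf t hπ)

noncomputable def weightComp (π₂ : X → ENNReal) (w₁ w₂ : X → X → ENNReal) (t t'' : X) : ENNReal :=
  ∑' t' : {t' : X // 0 < π₂ t'}, w₁ t t' * w₂ t' t'' / π₂ t'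

namespace IsWeight

variable {B B₁ B₂ : X → X → Prop} {π π' π₁ π₂ π₃ : X → ENNReal} {w w₁ w₂ : X → X → ENNReal}

lemma le_left (hw : IsWeight B π π' w) (t t' : X) : w t t' ≤ π t :=
  hw.2.1 t ▸ ENNReal.le_tsum t'

lemma le_right (hw : IsWeight B π π' w) (t t' : X) : w t t' ≤ π' t' :=
  hw.2.2.1 t' ▸ ENNReal.le_tsum t

lemma mono {C : X → X → Prop} (hw : IsWeight B π π' w) (h : ∀ t t', B t t' → C t t') :
    IsWeight C π π' w :=
  ⟨hw.1, hw.2.1, hw.2.2.1, fun t t' hpos => h t t' (hw.2.2.2 t t' hpos)⟩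

lemma tsum_weightComp_right (hw₁ : IsWeight B₁ π₁ π₂ w₁) (hw₂ : IsWeight B₂ π₂ π₃ w₂)
    (hπ₂ : ∀ t', π₂ t' ≠ ⊤) (t : X) : ∑' t'', weightComp π₂ w₁ w₂ t t'' = π₁ t := by
  calc ∑' t'', weightComp π₂ w₁ w₂ t t''
      = ∑' t' : {t' : X // 0 < π₂ t'}, ∑' t'', w₁ t t' / π₂ t' * w₂ t' t'' := by
        simp only [weightComp, ENNReal.mul_div_right_comm]
        exact ENNReal.tsum_comm
    _ = ∑' t' : {t' : X // 0 < π₂ t'}, w₁ t t' := by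
        refine tsum_congr fun t' => ?_
        rw [ENNReal.tsum_mul_left, hw₂.2.1, ENNReal.div_mul_cancel t'.2.ne' (hπ₂ t')]
    _ = ∑' t', w₁ t t' :=
        tsum_pos_subtype_eq fun t' h => nonpos_iff_eq_zero.mp (h ▸ hw₁.le_right t t')
    _ = π₁ t := hw₁.2.1 t

lemma tsum_weightComp_left (hw₁ : IsWeight B₁ π₁ π₂ w₁) (hw₂ : IsWeight B₂ π₂ π₃ w₂)
    (hπ₂ : ∀ t', π₂ t' ≠ ⊤) (t'' : X) : ∑' t, weightComp π₂ w₁ w₂ t t'' = π₃ t'' := by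
  calc ∑' t, weightComp π₂ w₁ w₂ t t''
      = ∑' t' : {t' : X // 0 < π₂ t'}, ∑' t, w₁ t t' * (w₂ t' t'' / π₂ t') := by
        simp only [weightComp, mul_div_assoc]
        exact ENNReal.tsum_comm
    _ = ∑' t' : {t' : X // 0 < π₂ t'}, w₂ t' t'' := by
        refine tsum_congr fun t' => ?_
        rw [ENNReal.tsum_mul_right, hw₁.2.2.1, ENNReal.mul_div_cancel t'.2.ne' (hπ₂ t')]
    _ = ∑' t', w₂ t' t'' :=
        tsum_pos_subtype_eq (π := π₂) fun t' h =>
          nonpos_iff_eq_zero.mp (h ▸ hw₂.le_left t' t'')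
    _ = π₃ t'' := hw₂.2.2.1 t''

lemma comp (hw₁ : IsWeight B₁ π₁ π₂ w₁) (hw₂ : IsWeight B₂ π₂ π₃ w₂)
    (hπ₂ : ∀ t', π₂ t' ≠ ⊤) (hπ₁ : ∀ t, π₁ t ≤ 1) :
    IsWeight (Relation.Comp B₁ B₂) π₁ π₃ (weightComp π₂ w₁ w₂) := by
  refine ⟨fun t t'' => ?_, tsum_weightComp_right hw₁ hw₂ hπ₂,
    tsum_weightComp_left hw₁ hw₂ hπ₂, fun t t'' hpos => ?_⟩
  · calc weightComp π₂ w₁ w₂ t t'' ≤ ∑' s, weightComp π₂ w₁ w₂ t s := ENNReal.le_tsum t''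
      _ = π₁ t := tsum_weightComp_right hw₁ hw₂ hπ₂ t
      _ ≤ 1 := hπ₁ t
  · obtain ⟨t', ht'⟩ : ∃ t' : {t' : X // 0 < π₂ t'}, w₁ t t' * w₂ t' t'' / π₂ t' ≠ 0 := by
      by_contra! h
      exact hpos.ne' (ENNReal.tsum_eq_zero.mpr h)
    obtain ⟨h₁, h₂⟩ := mul_ne_zero_iff.mp (ENNReal.div_ne_zero.mp ht').1
    exact ⟨t', hw₁.2.2.2 t t' (pos_iff_ne_zero.mpr h₁), hw₂.2.2.2 t' t'' (pos_iff_ne_zero.mpr h₂)⟩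

end IsWeight

end

theorem stmt_7_general {X : Type*} (B : X → X → Prop)
    (htrans : ∀ t t' t'', B t t' → B t' t'' → B t t'')
    (π₁ π₂ π₃ : X → ENNReal)
    (hπ₁ : ∑' t, π₁ t = 1) (hπ₂ : ∑' t, π₂ t = 1)
    (w₁ w₂ : X → X → ENNReal)
    (hw₁ : IsWeight B π₁ π₂ w₁) (hw₂ : IsWeight B π₂ π₃ w₂) :
    IsWeight B π₁ π₃
      (fun t t'' => ∑' t' : {t' : X // 0 < π₂ t'}, w₁ t t' * w₂ t' t'' / π₂ t')
    ∧ Lift B π₁ π₃ := by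
  have hπ₁_le : ∀ t, π₁ t ≤ 1 := fun t => hπ₁ ▸ ENNReal.le_tsum t
  have hπ₂_ne_top : ∀ t, π₂ t ≠ ⊤ := fun t =>
    ne_top_of_le_ne_top ENNReal.one_ne_top (hπ₂ ▸ ENNReal.le_tsum t)
  have hcomp : IsWeight B π₁ π₃ (weightComp π₂ w₁ w₂) :=
    (hw₁.comp hw₂ hπ₂_ne_top hπ₁_le).mono fun _ _ ⟨_, h₁, h₂⟩ => htrans _ _ _ h₁ h₂
  exact ⟨hcomp, _, hcomp⟩

/-- If  is transitive (and reflexive) then its lifting to probability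
distributions is transitive, with the composite weight function as witness. -/
theorem stmt_7 {X : Type*} [Countable X] (B : X → X → Prop)
    (htrans : ∀ t t' t'', B t t' → B t' t'' → B t t'')
    (hrefl : ∀ t, B t t)
    (π₁ π₂ π₃ : X → ENNReal)
    (hπ₁ : ∑' t, π₁ t = 1) (hπ₂ : ∑' t, π₂ t = 1) (hπ₃ : ∑' t, π₃ t = 1)
    (w₁ w₂ : X → X → ENNReal)
    (hw₁ : IsWeight B π₁ π₂ w₁) (hw₂ : IsWeight B π₂ π₃ w₂) :
    IsWeight B π₁ π₃
      (fun t t'' => ∑' t' : {t' : X // 0 < π₂ t'}, w₁ t t' * w₂ t' t'' / π₂ t')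
    ∧ Lift B π₁ π₃ :=
  stmt_7_general B htrans π₁ π₂ π₃ hπ₁ hπ₂ w₁ w₂ hw₁ hw₂
end

section
/- The lifting of a relation B is compatible with convex combinations: if π_i B̂ π'_i for each i in a finite index set I and p_i ∈ (0,1] with Σ p_i = 1, then (Σ_{i∈I} p_i π_i) B̂ (Σ_{i∈I} p_i π'_i). -/
/-- The lifting of a relation is compatible with convex combinations. -/
theorem stmt_9 {X I : Type*} [Countable X] [Fintype I] (B : X → X → Prop)
    (p : I → ENNReal) (hp0 : ∀ i, 0 < p i) (hp1 : ∀ i, p i ≤ 1)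
    (hps : ∑ i, p i = 1)
    (π π' : I → X → ENNReal)
    (hπ : ∀ i, ∑' t, π i t = 1) (hπ' : ∀ i, ∑' t, π' i t = 1)
    (h : ∀ i, Lift B (π i) (π' i)) :
    Lift B (fun t => ∑ i, p i * π i t) (fun t => ∑ i, p i * π' i t) := by
  choose w hw using h
  refine ⟨fun t t' => ∑ i, p i * w i t t', ?_, ?_, ?_, ?_⟩
  · intro t t'
    calc ∑ i, p i * w i t t' ≤ ∑ i, p i * 1 := by
          exact Finset.sum_le_sum fun i _ =>
            mul_le_mul_right ((hw i).1 t t') (p i)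
      _ = 1 := by simp [hps]
  · intro t
    rw [Summable.tsum_finsetSum (fun i _ => ENNReal.summable)]
    simp [ENNReal.tsum_mul_left, (hw _).2.1 t]
  · intro t'
    rw [Summable.tsum_finsetSum (fun i _ => ENNReal.summable)]
    simp [ENNReal.tsum_mul_left, (hw _).2.2.1 t']
  · intro t t' hpos
    obtain ⟨i, -, hi⟩ := Finset.exists_ne_zero_of_sum_ne_zero hpos.ne'
    exact (hw i).2.2.2 t t' (pos_iff_ne_zero.mpr fun hz => hi (by simp [hz]))
end

section
/- If the transfinite sequences CT_α, PT_α reach a fixed point λ (CT_λ = CT_{λ+1} = F(PT_λ) and PT_λ = PT_{λ+1} = F(CT_λ)), then the pair ⟨CT_λ, PT_λ⟩ is the least stable pair: for any pair ⟨C, Pt⟩ with C ⊆ Pt, C = F(Pt) and Pt = F(C), we have CT_λ ⊆ C and Pt ⊆ PT_λ. -/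
open Set

section AlternatingIteration

variable {L : Type*} [CompleteLattice L] {F : L → L} {CT PT : Ordinal → L} {C P : L}

theorem alternatingIteration_le_and_le (hF : Antitone F)
    (hCT0 : CT 0 = ⊥) (hPT0 : PT 0 = ⊤)
    (hCTsucc : ∀ α, CT (α + 1) = F (PT α)) (hPTsucc : ∀ α, PT (α + 1) = F (CT α))
    (hCTlim : ∀ α, Order.IsSuccLimit α → CT α = ⨆ β ∈ Iio α, CT β)
    (hPTlim : ∀ α, Order.IsSuccLimit α → PT α = ⨅ β ∈ Iio α, PT β)
    (hC : F P ≤ C) (hP : P ≤ F C) (α : Ordinal) :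
    CT α ≤ C ∧ P ≤ PT α := by
  induction α using Ordinal.limitRecOn with
  | zero => simp [hCT0, hPT0]
  | add_one β ih =>
    rw [hCTsucc, hPTsucc]
    exact ⟨(hF ih.2).trans hC, hP.trans (hF ih.1)⟩
  | limit α hα ih =>
    rw [hCTlim α hα, hPTlim α hα]
    exact ⟨iSup₂_le fun β hβ => (ih β hβ).1, le_iInf₂ fun β hβ => (ih β hβ).2⟩

end AlternatingIteration

theorem stmt_13_general {U : Type*} (F : Set U → Set U)
    (hF : ∀ S T : Set U, S ⊆ T → F T ⊆ F S)
    (CT PT : Ordinal → Set U)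
    (hCT0 : CT 0 = ∅) (hPT0 : PT 0 = Set.univ)
    (hCTsucc : ∀ α, CT (α + 1) = F (PT α))
    (hPTsucc : ∀ α, PT (α + 1) = F (CT α))
    (hCTlim : ∀ α, Order.IsSuccLimit α → CT α = ⋃ β ∈ Set.Iio α, CT β)
    (hPTlim : ∀ α, Order.IsSuccLimit α → PT α = ⋂ β ∈ Set.Iio α, PT β)
    (l : Ordinal) :
    ∀ C Pt : Set U, C ⊆ Pt → C = F Pt → Pt = F C →
      CT l ⊆ C ∧ Pt ⊆ PT l := by
  intro C Pt _ hC hPt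
  exact alternatingIteration_le_and_le hF hCT0 hPT0 hCTsucc hPTsucc hCTlim hPTlim
    hC.ge hPt.le l

/-- If the transfinite sequences reach a fixed point `l`, then
`⟨CT l, PT l⟩` is the least stable pair. -/
theorem stmt_13 {U : Type*} (F : Set U → Set U)
    (hF : ∀ S T : Set U, S ⊆ T → F T ⊆ F S)
    (CT PT : Ordinal → Set U)
    (hCT0 : CT 0 = ∅) (hPT0 : PT 0 = Set.univ)
    (hCTsucc : ∀ α, CT (α + 1) = F (PT α))
    (hPTsucc : ∀ α, PT (α + 1) = F (CT α))
    (hCTlim : ∀ α, Order.IsSuccLimit α → CT α = ⋃ β ∈ Set.Iio α, CT β)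
    (hPTlim : ∀ α, Order.IsSuccLimit α → PT α = ⋂ β ∈ Set.Iio α, PT β)
    (l : Ordinal)
    (hfixC : CT l = CT (l + 1)) (hfixP : PT l = PT (l + 1)) :
    ∀ C Pt : Set U, C ⊆ Pt → C = F Pt → Pt = F C →
      CT l ⊆ C ∧ Pt ⊆ PT l :=
  stmt_13_general F hF CT PT hCT0 hPT0 hCTsucc hPTsucc hCTlim hPTlim l
end
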